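/- arXiv:2505.04370 — 3 statements merged into one kernel-verified Lean document; each statement's English description precedes it below -/
import Mathlib

section
/- Let n ≥ 1 and let M be a real symmetric positive semidefinite n×n matrix. Then (det M)^(1/n) = (1/n) · inf_{B ∈ 𝓑} tr(B·M), where the infimum is taken over all B ∈ 𝓑. -/
/-!
For `B ∈ 𝓑` one has `tr (B M) = tr (√M B √M)`, and AM-GM applied to the eigenvalues of the
positive semidefinite matrix `√M B √M` gives `tr (B M) ≥ n (det B · det M)^(1/n) = n (det M)^(1/n)`.
For positive definite `M` equality holds at `B = (det M)^(1/n) M⁻¹`; a singular `M` is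
approximated by `M + δ I`, whose optimal value `n det (M + δ I)^(1/n)` tends to `n (det M)^(1/n)`.
-/

open Filter Topology

namespace Matrix

variable {ι : Type*} [Fintype ι] [DecidableEq ι]

lemma PosSemidef.card_mul_det_rpow_le_trace [Nonempty ι] {A : Matrix ι ι ℝ}
    (hA : A.PosSemidef) :
    Fintype.card ι * A.det ^ ((1 : ℝ) / Fintype.card ι) ≤ A.trace := by
  have hcard : (0 : ℝ) < Fintype.card ι := by exact_mod_cast Fintype.card_pos
  have hdet : A.det = ∏ i, hA.isHermitian.eigenvalues i := by
    simpa using hA.isHermitian.det_eq_prod_eigenvalues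
  have htr : A.trace = ∑ i, hA.isHermitian.eigenvalues i := by
    simpa using hA.isHermitian.trace_eq_sum_eigenvalues
  have amgm := Real.geom_mean_le_arith_mean Finset.univ (fun _ => 1)
    hA.isHermitian.eigenvalues (fun _ _ => zero_le_one) (by simpa using hcard)
    (fun i _ => hA.eigenvalues_nonneg i)
  simp only [Real.rpow_one, Finset.sum_const, Finset.card_univ, nsmul_eq_mul, mul_one,
    one_mul] at amgm
  rw [hdet, htr, one_div, mul_comm]
  exact (le_div_iff₀ hcard).mp amgm

open scoped MatrixOrder in
lemma PosSemidef.card_mul_det_mul_rpow_le_trace_mul [Nonempty ι] {B M : Matrix ι ι ℝ}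
    (hB : B.PosSemidef) (hM : M.PosSemidef) :
    Fintype.card ι * (B.det * M.det) ^ ((1 : ℝ) / Fintype.card ι) ≤ (B * M).trace := by
  set s := CFC.sqrt M
  have hss : s * s = M := CFC.sqrt_mul_sqrt_self M hM.nonneg
  have hsBs : (s * B * s).PosSemidef := by
    have := hB.mul_mul_conjTranspose_same s
    rwa [(nonneg_iff_posSemidef.mp (CFC.sqrt_nonneg M)).isHermitian.eq] at this
  have htr : (s * B * s).trace = (B * M).trace := by
    rw [trace_mul_cycle, hss, trace_mul_comm]
  have hdet : (s * B * s).det = B.det * M.det := by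
    rw [det_mul, det_mul, mul_right_comm, ← det_mul, hss, mul_comm]
  simpa [htr, hdet] using hsBs.card_mul_det_rpow_le_trace

lemma PosDef.exists_det_eq_one_trace_mul_eq [Nonempty ι] {M : Matrix ι ι ℝ} (hM : M.PosDef) :
    ∃ B : Matrix ι ι ℝ, B.PosDef ∧ B.det = 1 ∧
      (B * M).trace = Fintype.card ι * M.det ^ ((1 : ℝ) / Fintype.card ι) := by
  have hdet : 0 < M.det := hM.det_pos
  have hc : (M.det ^ ((1 : ℝ) / Fintype.card ι)) ^ Fintype.card ι = M.det := by
    rw [one_div, Real.rpow_inv_natCast_pow hdet.le Fintype.card_ne_zero]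
  refine ⟨M.det ^ ((1 : ℝ) / Fintype.card ι) • M⁻¹, hM.inv.smul (by positivity), ?_, ?_⟩
  · rw [det_smul, det_nonsing_inv, hc, Ring.inverse_eq_inv', mul_inv_cancel₀ hdet.ne']
  · rw [smul_mul, nonsing_inv_mul _ hdet.ne'.isUnit, trace_smul, trace_one, smul_eq_mul, mul_comm]

lemma PosSemidef.exists_det_eq_one_trace_mul_le [Nonempty ι] {M : Matrix ι ι ℝ}
    (hM : M.PosSemidef) {δ : ℝ} (hδ : 0 < δ) :
    ∃ B : Matrix ι ι ℝ, B.PosDef ∧ B.det = 1 ∧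
      (B * M).trace ≤ Fintype.card ι * (M + δ • 1).det ^ ((1 : ℝ) / Fintype.card ι) := by
  obtain ⟨B, hB, hdet, htr⟩ :=
    (PosDef.posSemidef_add hM (PosDef.one.smul hδ)).exists_det_eq_one_trace_mul_eq
  refine ⟨B, hB, hdet, ?_⟩
  rw [← htr, mul_add, trace_add, mul_smul_comm, mul_one, trace_smul, smul_eq_mul]
  exact le_add_of_nonneg_right (mul_nonneg hδ.le hB.posSemidef.trace_nonneg)

theorem PosSemidef.isGLB_trace_mul_det_eq_one [Nonempty ι] {M : Matrix ι ι ℝ}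
    (hM : M.PosSemidef) :
    IsGLB ((fun B : Matrix ι ι ℝ => (B * M).trace) '' {B | B.PosDef ∧ B.det = 1})
      (Fintype.card ι * M.det ^ ((1 : ℝ) / Fintype.card ι)) := by
  refine ⟨?_, fun b hb => ?_⟩
  · rintro _ ⟨B, ⟨hB, hdet⟩, rfl⟩
    simpa [hdet] using hB.posSemidef.card_mul_det_mul_rpow_le_trace_mul hM
  · have hcont : Continuous fun δ : ℝ =>
        Fintype.card ι * (M + δ • 1).det ^ ((1 : ℝ) / Fintype.card ι) := by
      fun_prop (disch := positivity)
    refine ge_of_tendsto ((hcont.tendsto' 0 _ (by simp)).mono_left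
      (nhdsWithin_le_nhds (s := Set.Ioi 0))) ?_
    filter_upwards [self_mem_nhdsWithin] with δ hδ
    obtain ⟨B, hB, hdet, hle⟩ := hM.exists_det_eq_one_trace_mul_le hδ
    exact (hb ⟨B, ⟨hB, hdet⟩, rfl⟩).trans hle

end Matrix

/-- **Bellman's principle.** For a real symmetric positive semidefinite `n × n` matrix `M`
(`n ≥ 1`), one has `(det M)^(1/n) = (1/n) · inf_{B ∈ 𝓑} tr(B·M)`, where `𝓑` is the set of
real symmetric positive definite `n × n` matrices of determinant `1`. -/
theorem bellman_principle (n : ℕ) (hn : 1 ≤ n)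
    (M : Matrix (Fin n) (Fin n) ℝ) (hM : M.PosSemidef) :
    M.det ^ ((1 : ℝ) / n) =
      (1 / n) * sInf ((fun B : Matrix (Fin n) (Fin n) ℝ => (B * M).trace) ''
        {B : Matrix (Fin n) (Fin n) ℝ | B.PosDef ∧ B.det = 1}) := by
  have : NeZero n := ⟨by omega⟩
  have hne : ((fun B : Matrix (Fin n) (Fin n) ℝ => (B * M).trace) ''
      {B | B.PosDef ∧ B.det = 1}).Nonempty := ⟨_, 1, ⟨Matrix.PosDef.one, Matrix.det_one⟩, rfl⟩
  rw [hM.isGLB_trace_mul_det_eq_one.csInf_eq hne, Fintype.card_fin]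
  field_simp
end

section
/- Let n ≥ 1, let B be a real symmetric positive definite n×n matrix and let M be a real symmetric positive semidefinite n×n matrix. Then det B · det M ≤ ((1/n) · tr(B·M))^n. -/
/-!
Conjugating `M` by `√B` gives the positive semidefinite matrix `√B * M * √B`, whose determinant
is `det B * det M` and whose trace is `tr (B * M)`. For a positive semidefinite matrix, AM-GM on
its (nonnegative) eigenvalues bounds the determinant, their product, by the `n`-th power of the
mean of the trace, their sum.
-/

open Finset
open scoped MatrixOrder

theorem Real.prod_le_sum_div_card_pow {ι : Type*} (s : Finset ι) (z : ι → ℝ)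
    (hz : ∀ i ∈ s, 0 ≤ z i) : ∏ i ∈ s, z i ≤ ((∑ i ∈ s, z i) / #s) ^ #s := by
  rcases s.eq_empty_or_nonempty with rfl | hs
  · simp
  have hcard : (0 : ℝ) < #s := by exact_mod_cast hs.card_pos
  have amgm := Real.geom_mean_le_arith_mean s (fun _ ↦ 1) z (fun _ _ ↦ zero_le_one)
    (by simpa using hcard) hz
  simp only [Real.rpow_one, sum_const, nsmul_eq_mul, mul_one, one_mul] at amgm
  calc ∏ i ∈ s, z i = ((∏ i ∈ s, z i) ^ (#s : ℝ)⁻¹) ^ #s := by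
        rw [← Real.rpow_natCast, ← Real.rpow_mul (prod_nonneg hz), inv_mul_cancel₀ hcard.ne',
          Real.rpow_one]
    _ ≤ ((∑ i ∈ s, z i) / #s) ^ #s := by gcongr; exact Real.rpow_nonneg (prod_nonneg hz) _

namespace Matrix

variable {n : Type*} [Fintype n] [DecidableEq n]

theorem PosSemidef.det_le_trace_div_card_pow {A : Matrix n n ℝ} (hA : A.PosSemidef) :
    A.det ≤ (A.trace / Fintype.card n) ^ Fintype.card n := by
  have hdet : A.det = ∏ i, hA.1.eigenvalues i := by simpa using hA.1.det_eq_prod_eigenvalues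
  have htrace : A.trace = ∑ i, hA.1.eigenvalues i := by
    simpa using hA.1.trace_eq_sum_eigenvalues
  rw [hdet, htrace, ← card_univ]
  exact Real.prod_le_sum_div_card_pow _ _ fun i _ ↦ hA.eigenvalues_nonneg i

theorem PosSemidef.det_mul_det_le_trace_mul_div_card_pow {A B : Matrix n n ℝ}
    (hA : A.PosSemidef) (hB : B.PosSemidef) :
    A.det * B.det ≤ ((A * B).trace / Fintype.card n) ^ Fintype.card n := by
  set S := CFC.sqrt A
  have hSS : S * S = A := CFC.sqrt_mul_sqrt_self A hA.nonneg
  have hSH : Sᴴ = S := (nonneg_iff_posSemidef.mp (CFC.sqrt_nonneg A)).1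
  have hconj : (S * B * S).PosSemidef := by
    simpa only [hSH] using hB.mul_mul_conjTranspose_same S
  have hdet : (S * B * S).det = A.det * B.det := by
    rw [det_mul, det_mul, ← hSS, det_mul]
    ring
  have htrace : (S * B * S).trace = (A * B).trace := by rw [trace_mul_cycle, hSS]
  simpa only [hdet, htrace] using hconj.det_le_trace_div_card_pow

end Matrix

theorem det_mul_det_le_trace_pow_general (n : ℕ)
    (B M : Matrix (Fin n) (Fin n) ℝ) (hB : B.PosDef) (hM : M.PosSemidef) :
    B.det * M.det ≤ ((1 / n) * (B * M).trace) ^ n := by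
  simpa [div_eq_inv_mul] using hB.posSemidef.det_mul_det_le_trace_mul_div_card_pow hM

/-- For `n ≥ 1`, a real symmetric positive definite `n × n` matrix `B` and a real symmetric
positive semidefinite `n × n` matrix `M`, one has `det B · det M ≤ ((1/n) · tr(B·M))^n`. -/
theorem det_mul_det_le_trace_pow (n : ℕ) (hn : 1 ≤ n)
    (B M : Matrix (Fin n) (Fin n) ℝ) (hB : B.PosDef) (hM : M.PosSemidef) :
    B.det * M.det ≤ ((1 / n) * (B * M).trace) ^ n :=
  det_mul_det_le_trace_pow_general n B M hB hM
end

section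
/- Let n ≥ 1 and let M be a real symmetric positive semidefinite n×n matrix with det M = 0 (i.e. M is singular). Then for every ε > 0 there exists B ∈ 𝓑 with tr(B·M) < ε; consequently inf_{B ∈ 𝓑} tr(B·M) = 0. -/
/-!
Diagonalise `M = U diag(d) Uᵀ` with `U` orthogonal; singularity gives an eigenvalue `d i₀ = 0`.
For `B = U diag(e) Uᵀ` one has `det B = ∏ e` and `tr(B M) = ∑ e d`, so put weight `s` on every
eigendirection except the `i₀`-th, which gets `s^{-(n-1)}` to keep `det B = 1`; the large weight
meets a zero eigenvalue, hence `tr(B M) = s · tr M → 0`. The infimum is then `0` because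
`tr(B M) ≥ 0` for positive semidefinite `B` and `M`.
-/

open Finset Matrix Unitary

theorem exists_pos_prod_eq_one_sum_mul_lt {ι : Type*} [Fintype ι] [DecidableEq ι] {d : ι → ℝ}
    (hd : ∀ i, 0 ≤ d i) {i₀ : ι} (hi₀ : d i₀ = 0) {ε : ℝ} (hε : 0 < ε) :
    ∃ e : ι → ℝ, (∀ i, 0 < e i) ∧ ∏ i, e i = 1 ∧ ∑ i, e i * d i < ε := by
  set T := ∑ i, d i
  have hT : 0 ≤ T := sum_nonneg fun i _ ↦ hd i
  set s := ε / (T + 1)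
  have hs : 0 < s := by positivity
  set e := Function.update (fun _ ↦ s) i₀ (s ^ (Fintype.card ι - 1))⁻¹
  have he : ∀ i, e i * d i = s * d i := by
    intro i
    rcases eq_or_ne i i₀ with rfl | hi
    · simp [hi₀]
    · simp [e, hi]
  refine ⟨e, fun i ↦ ?_, ?_, ?_⟩
  · rcases eq_or_ne i i₀ with rfl | hi
    · simpa [e] using pow_pos hs _
    · simpa [e, hi] using hs
  · rw [prod_update_of_mem (mem_univ i₀), prod_const, card_sdiff_of_subset (by simp)]
    simp [hs.ne']
  · calc ∑ i, e i * d i = s * T := by rw [sum_congr rfl fun i _ ↦ he i, ← mul_sum]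
      _ < ε := by
        rw [div_mul_eq_mul_div, div_lt_iff₀ (by positivity)]
        linarith

namespace Matrix

variable {n : Type*} [Fintype n] [DecidableEq n]

open scoped ComplexOrder MatrixOrder in
theorem PosSemidef.trace_mul_nonneg {𝕜 : Type*} [RCLike 𝕜] {A B : Matrix n n 𝕜}
    (hA : A.PosSemidef) (hB : B.PosSemidef) : 0 ≤ (A * B).trace := by
  obtain ⟨C, rfl⟩ := CStarAlgebra.nonneg_iff_eq_star_mul_self.mp hB.nonneg
  rw [← mul_assoc, trace_mul_comm, ← mul_assoc, star_eq_conjTranspose]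
  exact (hA.mul_mul_conjTranspose_same C).trace_nonneg

section conjStarAlgAut

variable {R : Type*} [CommRing R] [StarRing R]

theorem trace_conjStarAlgAut (U : unitary (Matrix n n R)) (A : Matrix n n R) :
    (conjStarAlgAut R _ U A).trace = A.trace := by
  rw [conjStarAlgAut_apply, trace_mul_cycle, coe_star_mul_self, one_mul]

theorem det_conjStarAlgAut (U : unitary (Matrix n n R)) (A : Matrix n n R) :
    (conjStarAlgAut R _ U A).det = A.det := by
  rw [conjStarAlgAut_apply, det_mul, det_mul, mul_right_comm, ← det_mul, ← coe_star,
    coe_mul_star_self, det_one, one_mul]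

end conjStarAlgAut

theorem PosSemidef.exists_posDef_det_eq_one_trace_mul_lt {M : Matrix n n ℝ} (hM : M.PosSemidef)
    (hdet : M.det = 0) {ε : ℝ} (hε : 0 < ε) :
    ∃ B : Matrix n n ℝ, B.PosDef ∧ B.det = 1 ∧ (B * M).trace < ε := by
  obtain ⟨i₀, hi₀⟩ : ∃ i, hM.1.eigenvalues i = 0 := by
    simpa [hM.1.det_eq_prod_eigenvalues, prod_eq_zero_iff] using hdet
  obtain ⟨e, he_pos, he_prod, he_sum⟩ :=
    exists_pos_prod_eq_one_sum_mul_lt hM.eigenvalues_nonneg hi₀ hε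
  set U := hM.1.eigenvectorUnitary
  have hM_diag : M = conjStarAlgAut ℝ _ U (diagonal hM.1.eigenvalues) := by
    simpa using hM.1.spectral_theorem
  refine ⟨conjStarAlgAut ℝ _ U (diagonal e), ?_, ?_, ?_⟩
  · rw [conjStarAlgAut_apply, isUnit_coe.posDef_star_right_conjugate_iff]
    exact PosDef.diagonal he_pos
  · rw [det_conjStarAlgAut, det_diagonal, he_prod]
  · rw [hM_diag, ← map_mul, trace_conjStarAlgAut, diagonal_mul_diagonal, trace_diagonal]
    exact he_sum

end Matrix

theorem singular_psd_inf_trace_eq_zero_general (n : ℕ)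
    (M : Matrix (Fin n) (Fin n) ℝ) (hM : M.PosSemidef) (hdet : M.det = 0) :
    (∀ ε : ℝ, 0 < ε → ∃ B : Matrix (Fin n) (Fin n) ℝ,
        B.PosDef ∧ B.det = 1 ∧ (B * M).trace < ε) ∧
      sInf ((fun B : Matrix (Fin n) (Fin n) ℝ => (B * M).trace) ''
        {B : Matrix (Fin n) (Fin n) ℝ | B.PosDef ∧ B.det = 1}) = 0 := by
  have small : ∀ ε : ℝ, 0 < ε → ∃ B : Matrix (Fin n) (Fin n) ℝ,
      B.PosDef ∧ B.det = 1 ∧ (B * M).trace < ε :=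
    fun ε hε ↦ hM.exists_posDef_det_eq_one_trace_mul_lt hdet hε
  refine ⟨small, csInf_eq_of_forall_ge_of_forall_gt_exists_lt ?_ ?_ ?_⟩
  · obtain ⟨B, hB, hB_det, -⟩ := small 1 one_pos
    exact ⟨_, B, ⟨hB, hB_det⟩, rfl⟩
  · rintro _ ⟨B, ⟨hB, -⟩, rfl⟩
    exact hB.posSemidef.trace_mul_nonneg hM
  · intro ε hε
    obtain ⟨B, hB, hB_det, hlt⟩ := small ε hε
    exact ⟨_, ⟨B, ⟨hB, hB_det⟩, rfl⟩, hlt⟩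

/-- If `M` is a real symmetric positive semidefinite `n × n` matrix (`n ≥ 1`) with
`det M = 0`, then for every `ε > 0` there is `B ∈ 𝓑` (symmetric positive definite with
determinant `1`) such that `tr(B·M) < ε`; consequently `inf_{B ∈ 𝓑} tr(B·M) = 0`. -/
theorem singular_psd_inf_trace_eq_zero (n : ℕ) (hn : 1 ≤ n)
    (M : Matrix (Fin n) (Fin n) ℝ) (hM : M.PosSemidef) (hdet : M.det = 0) :
    (∀ ε : ℝ, 0 < ε → ∃ B : Matrix (Fin n) (Fin n) ℝ,
        B.PosDef ∧ B.det = 1 ∧ (B * M).trace < ε) ∧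
      sInf ((fun B : Matrix (Fin n) (Fin n) ℝ => (B * M).trace) ''
        {B : Matrix (Fin n) (Fin n) ℝ | B.PosDef ∧ B.det = 1}) = 0 :=
  singular_psd_inf_trace_eq_zero_general n M hM hdet
end
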